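/- Let A₁, A₂, A₃ be 2×2 real matrices of determinant 1, and set A₄ = (A₃A₂A₁)⁻¹, A₅ = (A₂A₁)⁻¹, A₆ = (A₃A₂)⁻¹. Assume Tr(A_k) < −2 for every k ∈ {1,...,6}. Let v₁ = Φ(I), v₂ = Φ(A₂A₁), v₃ = Φ(A₁), v₄ = Φ(A₃A₂A₁), where Φ([[a,b],[c,d]]) = ((a+d)/2, (b−c)/2, (a−d)/2, (b+c)/2) and I is the identity matrix. Then ⟨vᵢ,vᵢ⟩ = 1 for each i, and ⟨v₁,v₂⟩ = (1/2)Tr A₅, ⟨v₁,v₃⟩ = (1/2)Tr A₁, ⟨v₁,v₄⟩ = (1/2)Tr A₄, ⟨v₂,v₃⟩ = (1/2)Tr A₂, ⟨v₂,v₄⟩ = (1/2)Tr A₃, ⟨v₃,v₄⟩ = (1/2)Tr A₆; in particular ⟨vᵢ,vⱼ⟩ < −1 for all i ≠ j, so for every pair i ≠ j there is t ∈ (0,1) with ⟨t·vᵢ + (1−t)·vⱼ, t·vᵢ + (1−t)·vⱼ⟩ < 0. -/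
import Mathlib


noncomputable section

/-- The symmetric bilinear form of signature (2,2) on ℝ⁴ (the Lorentzian space E^{2,2}). -/
def bil (x y : Fin 4 → ℝ) : ℝ := x 0 * y 0 + x 1 * y 1 - x 2 * y 2 - x 3 * y 3

/-- The identification Φ of 2×2 real matrices with E^{2,2}. -/
def Phi (A : Matrix (Fin 2) (Fin 2) ℝ) : Fin 4 → ℝ :=
  ![(A 0 0 + A 1 1) / 2, (A 0 1 - A 1 0) / 2, (A 0 0 - A 1 1) / 2, (A 0 1 + A 1 0) / 2]



lemma bil_phi (M N : Matrix (Fin 2) (Fin 2) ℝ) :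
    bil (Phi M) (Phi N) = (M * N.adjugate).trace / 2 := by
  simp [bil, Phi, Matrix.adjugate_fin_two, Matrix.trace_fin_two, Matrix.mul_apply,
    Fin.sum_univ_two]
  ring

lemma bil_self (M : Matrix (Fin 2) (Fin 2) ℝ) : bil (Phi M) (Phi M) = M.det := by
  simp [bil, Phi, Matrix.det_fin_two]
  ring

lemma trace_adj (M : Matrix (Fin 2) (Fin 2) ℝ) : M.adjugate.trace = M.trace := by
  simp [Matrix.adjugate_fin_two, Matrix.trace_fin_two, add_comm]

lemma inv_eq_adj {M : Matrix (Fin 2) (Fin 2) ℝ} (h : M.det = 1) : M⁻¹ = M.adjugate := by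
  rw [Matrix.inv_def, h]; simp

lemma bil_comm (x y : Fin 4 → ℝ) : bil x y = bil y x := by simp [bil]; ring

lemma bil_combo (t : ℝ) (x y : Fin 4 → ℝ) :
    bil (t • x + (1 - t) • y) (t • x + (1 - t) • y) =
      t^2 * bil x x + 2*t*(1-t) * bil x y + (1-t)^2 * bil y y := by
  simp [bil, Pi.add_apply, Pi.smul_apply, smul_eq_mul]
  ring


/-- The holonomy matrices of a hyperbolic four-holed sphere give rise to the vertices of a
truncated hyperideal anti-de Sitter tetrahedron: the vectors Φ(I), Φ(A₂A₁), Φ(A₁), Φ(A₃A₂A₁)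
are unit vectors whose pairwise pairings are the half-traces ½Tr A_k < −1, so every segment
between two of them meets B^{2,2}. -/
theorem stmt13 (A₁ A₂ A₃ A₄ A₅ A₆ : Matrix (Fin 2) (Fin 2) ℝ)
    (d₁ : A₁.det = 1) (d₂ : A₂.det = 1) (d₃ : A₃.det = 1)
    (h₄ : A₄ = (A₃ * A₂ * A₁)⁻¹) (h₅ : A₅ = (A₂ * A₁)⁻¹) (h₆ : A₆ = (A₃ * A₂)⁻¹)
    (t₁ : A₁.trace < -2) (t₂ : A₂.trace < -2) (t₃ : A₃.trace < -2)
    (t₄ : A₄.trace < -2) (t₅ : A₅.trace < -2) (t₆ : A₆.trace < -2)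
    (v : Fin 4 → (Fin 4 → ℝ))
    (hv : v = ![Phi 1, Phi (A₂ * A₁), Phi A₁, Phi (A₃ * A₂ * A₁)]) :
    (∀ i, bil (v i) (v i) = 1) ∧
    bil (v 0) (v 1) = A₅.trace / 2 ∧
    bil (v 0) (v 2) = A₁.trace / 2 ∧
    bil (v 0) (v 3) = A₄.trace / 2 ∧
    bil (v 1) (v 2) = A₂.trace / 2 ∧
    bil (v 1) (v 3) = A₃.trace / 2 ∧
    bil (v 2) (v 3) = A₆.trace / 2 ∧
    (∀ i j, i ≠ j → bil (v i) (v j) < -1) ∧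
    (∀ i j, i ≠ j → ∃ t ∈ Set.Ioo (0 : ℝ) 1,
      bil (t • v i + (1 - t) • v j) (t • v i + (1 - t) • v j) < 0) := by
  subst hv h₄ h₅ h₆
  have hA1 : A₁ * A₁.adjugate = 1 := by rw [Matrix.mul_adjugate, d₁, one_smul]
  have hA2 : A₂ * A₂.adjugate = 1 := by rw [Matrix.mul_adjugate, d₂, one_smul]
  have d21 : (A₂ * A₁).det = 1 := by rw [Matrix.det_mul, d₁, d₂, one_mul]
  have d32 : (A₃ * A₂).det = 1 := by rw [Matrix.det_mul, d₂, d₃, one_mul]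
  have d321 : (A₃ * A₂ * A₁).det = 1 := by rw [Matrix.det_mul, d32, d₁, one_mul]
  set w : Fin 4 → Fin 4 → ℝ := ![Phi 1, Phi (A₂ * A₁), Phi A₁, Phi (A₃ * A₂ * A₁)] with hw
  have hunit : ∀ i, bil (w i) (w i) = 1 := by
    intro i
    fin_cases i
    · show bil (Phi 1) (Phi 1) = 1
      rw [bil_self]; simp
    · show bil (Phi (A₂ * A₁)) (Phi (A₂ * A₁)) = 1
      rw [bil_self]; exact d21
    · show bil (Phi A₁) (Phi A₁) = 1
      rw [bil_self]; exact d₁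
    · show bil (Phi (A₃ * A₂ * A₁)) (Phi (A₃ * A₂ * A₁)) = 1
      rw [bil_self]; exact d321
  have e01 : bil (Phi 1) (Phi (A₂ * A₁)) = ((A₂ * A₁)⁻¹).trace / 2 := by
    rw [bil_phi, one_mul, inv_eq_adj d21]
  have e02 : bil (Phi 1) (Phi A₁) = A₁.trace / 2 := by
    rw [bil_phi, one_mul, trace_adj]
  have e03 : bil (Phi 1) (Phi (A₃ * A₂ * A₁)) = ((A₃ * A₂ * A₁)⁻¹).trace / 2 := by
    rw [bil_phi, one_mul, inv_eq_adj d321]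
  have e12 : bil (Phi (A₂ * A₁)) (Phi A₁) = A₂.trace / 2 := by
    rw [bil_phi, mul_assoc, hA1, mul_one]
  have e13 : bil (Phi (A₂ * A₁)) (Phi (A₃ * A₂ * A₁)) = A₃.trace / 2 := by
    rw [bil_phi, Matrix.adjugate_mul_distrib, Matrix.adjugate_mul_distrib]
    have h : A₂ * A₁ * (A₁.adjugate * (A₂.adjugate * A₃.adjugate)) = A₃.adjugate := by
      simp only [mul_assoc]
      rw [← mul_assoc A₁ A₁.adjugate, hA1, one_mul, ← mul_assoc A₂ A₂.adjugate, hA2, one_mul]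
    rw [h, trace_adj]
  have e23 : bil (Phi A₁) (Phi (A₃ * A₂ * A₁)) = ((A₃ * A₂)⁻¹).trace / 2 := by
    rw [bil_phi, Matrix.adjugate_mul_distrib, ← mul_assoc, hA1, one_mul, inv_eq_adj d32]
  have hpair : ∀ i j, i ≠ j → bil (w i) (w j) < -1 := by
    intro i j hij
    fin_cases i <;> fin_cases j
    · exact absurd rfl hij
    · show bil (Phi 1) (Phi (A₂ * A₁)) < -1
      rw [e01]; linarith
    · show bil (Phi 1) (Phi A₁) < -1
      rw [e02]; linarith
    · show bil (Phi 1) (Phi (A₃ * A₂ * A₁)) < -1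
      rw [e03]; linarith
    · show bil (Phi (A₂ * A₁)) (Phi 1) < -1
      rw [bil_comm, e01]; linarith
    · exact absurd rfl hij
    · show bil (Phi (A₂ * A₁)) (Phi A₁) < -1
      rw [e12]; linarith
    · show bil (Phi (A₂ * A₁)) (Phi (A₃ * A₂ * A₁)) < -1
      rw [e13]; linarith
    · show bil (Phi A₁) (Phi 1) < -1
      rw [bil_comm, e02]; linarith
    · show bil (Phi A₁) (Phi (A₂ * A₁)) < -1
      rw [bil_comm, e12]; linarith
    · exact absurd rfl hij
    · show bil (Phi A₁) (Phi (A₃ * A₂ * A₁)) < -1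
      rw [e23]; linarith
    · show bil (Phi (A₃ * A₂ * A₁)) (Phi 1) < -1
      rw [bil_comm, e03]; linarith
    · show bil (Phi (A₃ * A₂ * A₁)) (Phi (A₂ * A₁)) < -1
      rw [bil_comm, e13]; linarith
    · show bil (Phi (A₃ * A₂ * A₁)) (Phi A₁) < -1
      rw [bil_comm, e23]; linarith
    · exact absurd rfl hij
  refine ⟨hunit, e01, e02, e03, e12, e13, e23, hpair, ?_⟩
  intro i j hij
  refine ⟨1/2, ⟨by norm_num, by norm_num⟩, ?_⟩
  rw [bil_combo]
  have hb := hpair i j hij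
  have hi := hunit i
  have hj := hunit j
  nlinarith
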